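/- Let γ>1, k>0, ρ₀>0 be constants and S : ℝ→ℝ a C¹ function. Suppose M, D, A : ℝ×ℝ→ℝ are C¹ with M>0, S−A>0, satisfying ∂ₜM+∂ₓD=0 and ∂ₜD+∂ₓ(D²/M + M c_a²/γ) = (M c_a²/(γ(S−A)))·∂ₓ(S−A), where c_a² = kγ(ρ₀M/(S−A))^{γ−1}. Define the air energy E_a = M v²/2 + c_a² M/(γ(γ−1)) with v = D/M, and the air entropy flux H_a = (E_a + c_a² M/γ)·v. Then ∂ₜE_a + ∂ₓH_a = (c_a² M/(γ(S−A)))·∂ₜA. -/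

import Mathlib

open Real MeasureTheory

/-- Partial derivative with respect to the first (time) variable. -/
noncomputable def pt (f : ℝ → ℝ → ℝ) (t x : ℝ) : ℝ := deriv (fun s => f s x) t

/-- Partial derivative with respect to the second (space) variable. -/
noncomputable def px (f : ℝ → ℝ → ℝ) (t x : ℝ) : ℝ := deriv (fun y => f t y) x

/-!
With the pressure `P = c_a² M / γ = k ρ₀^(γ-1) M^γ (S - A)^(1-γ)`, the energy is
`E_a = D²/(2M) + P/(γ-1)` and the flux `H_a = (E_a + P) v`, and in either variable
`∂P = P (γ ∂M/M - (γ-1) ∂(S-A)/(S-A))`. Substituting the mass equation for `∂ₜM` and the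
momentum equation for `∂ₜD`, the kinetic terms of `∂ₜE_a + ∂ₓH_a` collapse to
`v (P ∂ₓ(S-A)/(S-A) - ∂ₓP)`, and the pressure terms to `v ∂ₓP - P (∂ₜ(S-A) + v ∂ₓ(S-A))/(S-A)`
because `∂ₜM + v ∂ₓM = -M ∂ₓv`. What survives is `-P ∂ₜ(S-A)/(S-A) = P ∂ₜA/(S-A)`.
-/

theorem hasDerivAt_pt {F : ℝ → ℝ → ℝ} {t x : ℝ}
    (hF : DifferentiableAt ℝ (Function.uncurry F) (t, x)) :
    HasDerivAt (fun s => F s x) (pt F t x) t :=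
  DifferentiableAt.hasDerivAt <|
    hF.comp (f := fun s => (s, x)) t (differentiableAt_id.prodMk (differentiableAt_const x))

theorem hasDerivAt_px {F : ℝ → ℝ → ℝ} {t x : ℝ}
    (hF : DifferentiableAt ℝ (Function.uncurry F) (t, x)) :
    HasDerivAt (fun y => F t y) (px F t x) x :=
  DifferentiableAt.hasDerivAt <|
    hF.comp (f := fun y => (t, y)) x ((differentiableAt_const t).prodMk differentiableAt_id)

theorem pt_eq_of_hasDerivAt {F : ℝ → ℝ → ℝ} {f : ℝ → ℝ} {f' t x : ℝ} (hF : ∀ s, F s x = f s)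
    (hf : HasDerivAt f f' t) : pt F t x = f' := by
  simpa only [pt, hF] using hf.deriv

theorem px_eq_of_hasDerivAt {F : ℝ → ℝ → ℝ} {f : ℝ → ℝ} {f' t x : ℝ} (hF : ∀ y, F t y = f y)
    (hf : HasDerivAt f f' x) : px F t x = f' := by
  simpa only [px, hF] using hf.deriv

section Line

variable {m d b c : ℝ → ℝ} {m' d' b' c' t : ℝ}

theorem HasDerivAt.const_mul_div_rpow (a p : ℝ) (hm : HasDerivAt m m' t) (hb : HasDerivAt b b' t)
    (hm0 : m t ≠ 0) (hb0 : b t ≠ 0) :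
    HasDerivAt (fun s => a * (m s / b s) ^ p)
      (p * (a * (m t / b t) ^ p) * (m' / m t - b' / b t)) t := by
  refine ((hm.fun_div hb hb0).rpow_const (Or.inl (div_ne_zero hm0 hb0))).const_mul a
    |>.congr_deriv ?_
  rw [Real.rpow_sub_one (div_ne_zero hm0 hb0)]
  field_simp

variable (γ : ℝ)

theorem HasDerivAt.airEnergy (hm : HasDerivAt m m' t) (hd : HasDerivAt d d' t)
    (hc : HasDerivAt c c' t) (hm0 : m t ≠ 0) :
    HasDerivAt (fun s => m s * (d s / m s) ^ 2 / 2 + c s * m s / (γ * (γ - 1)))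
      (d t * d' / m t - d t ^ 2 * m' / (2 * m t ^ 2) + (c' * m t + c t * m') / (γ * (γ - 1)))
      t := by
  refine (((hm.fun_mul ((hd.fun_div hm hm0).fun_pow 2)).div_const 2).fun_add
    ((hc.fun_mul hm).div_const (γ * (γ - 1)))).congr_deriv ?_
  simp only [Nat.cast_ofNat, Nat.add_one_sub_one, pow_one]
  field_simp
  ring

/-- The flux equals `d³/(2m²) + c d/(γ-1)`. -/
theorem HasDerivAt.airEnergyFlux (hm : HasDerivAt m m' t) (hd : HasDerivAt d d' t)
    (hc : HasDerivAt c c' t) (hm0 : m t ≠ 0) (hγ0 : γ ≠ 0) (hγ1 : γ - 1 ≠ 0) :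
    HasDerivAt (fun s => (m s * (d s / m s) ^ 2 / 2 + c s * m s / (γ * (γ - 1)) + c s * m s / γ)
        * (d s / m s))
      (3 * d t ^ 2 * d' / (2 * m t ^ 2) - d t ^ 3 * m' / m t ^ 3 + (c' * d t + c t * d') / (γ - 1))
      t := by
  refine ((((hm.fun_mul ((hd.fun_div hm hm0).fun_pow 2)).div_const 2).fun_add
    ((hc.fun_mul hm).div_const (γ * (γ - 1)))).fun_add ((hc.fun_mul hm).div_const γ)).fun_mul
    (hd.fun_div hm hm0) |>.congr_deriv ?_
  simp only [Nat.cast_ofNat, Nat.add_one_sub_one, pow_one]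
  field_simp
  ring

theorem HasDerivAt.airMomentumFlux (hm : HasDerivAt m m' t) (hd : HasDerivAt d d' t)
    (hc : HasDerivAt c c' t) (hm0 : m t ≠ 0) :
    HasDerivAt (fun s => d s ^ 2 / m s + m s * c s / γ)
      (2 * d t * d' / m t - d t ^ 2 * m' / m t ^ 2 + (m' * c t + m t * c') / γ) t := by
  refine ((hd.fun_pow 2).fun_div hm hm0).fun_add ((hm.fun_mul hc).div_const γ) |>.congr_deriv ?_
  simp only [Nat.cast_ofNat, Nat.add_one_sub_one, pow_one]
  field_simp

end Line

theorem air_energy_balance_general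
    (γ k ρ₀ : ℝ) (hγ : 1 < γ) (hρ₀ : 0 < ρ₀)
    (S : ℝ → ℝ) (hSreg : ContDiff ℝ 1 S)
    (M D A : ℝ → ℝ → ℝ)
    (hMreg : ContDiff ℝ 1 (Function.uncurry M))
    (hDreg : ContDiff ℝ 1 (Function.uncurry D))
    (hAreg : ContDiff ℝ 1 (Function.uncurry A))
    (hMpos : ∀ t x, 0 < M t x)
    (hSA : ∀ t x, 0 < S x - A t x)
    (ca2 : ℝ → ℝ → ℝ)
    (hca2 : ∀ t x, ca2 t x = k * γ * (ρ₀ * M t x / (S x - A t x)) ^ (γ - 1))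
    (hmass : ∀ t x, pt M t x + px D t x = 0)
    (hmom : ∀ t x,
      pt D t x + px (fun t x => D t x ^ 2 / M t x + M t x * ca2 t x / γ) t x
        = M t x * ca2 t x / (γ * (S x - A t x)) * px (fun t x => S x - A t x) t x)
    (v : ℝ → ℝ → ℝ) (hv : ∀ t x, v t x = D t x / M t x)
    (Ea Ha : ℝ → ℝ → ℝ)
    (hEa : ∀ t x, Ea t x = M t x * v t x ^ 2 / 2
        + ca2 t x * M t x / (γ * (γ - 1)))
    (hHa : ∀ t x, Ha t x = (Ea t x + ca2 t x * M t x / γ) * v t x) :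
    ∀ t x, pt Ea t x + px Ha t x
      = ca2 t x * M t x / (γ * (S x - A t x)) * pt A t x := by
  intro t x
  have hM0 := (hMpos t x).ne'
  have hB0 := (hSA t x).ne'
  have hρ₀M : ρ₀ * M t x ≠ 0 := by positivity
  have hγ0 : γ ≠ 0 := by positivity
  have hγ1 : γ - 1 ≠ 0 := by linarith
  have hM := hMreg.differentiable one_ne_zero (t, x)
  have hD := hDreg.differentiable one_ne_zero (t, x)
  have hA := hAreg.differentiable one_ne_zero (t, x)
  have hBt := (hasDerivAt_pt hA).const_sub (S x)
  have hBx := (hSreg.differentiable one_ne_zero x).hasDerivAt.fun_sub (hasDerivAt_px hA)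
  have hct := ((hasDerivAt_pt hM).const_mul ρ₀).const_mul_div_rpow (k * γ) (γ - 1) hBt hρ₀M hB0
  have hcx := ((hasDerivAt_px hM).const_mul ρ₀).const_mul_div_rpow (k * γ) (γ - 1) hBx hρ₀M hB0
  have hE : pt Ea t x = _ := pt_eq_of_hasDerivAt (fun s => by rw [hEa, hv, hca2])
    ((hasDerivAt_pt hM).airEnergy γ (hasDerivAt_pt hD) hct hM0)
  have hH : px Ha t x = _ := px_eq_of_hasDerivAt (fun y => by rw [hHa, hEa, hv, hca2])
    ((hasDerivAt_px hM).airEnergyFlux γ (hasDerivAt_px hD) hcx hM0 hγ0 hγ1)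
  have hF : px (fun t x => D t x ^ 2 / M t x + M t x * ca2 t x / γ) t x = _ :=
    px_eq_of_hasDerivAt (fun y => by rw [hca2])
      ((hasDerivAt_px hM).airMomentumFlux γ (hasDerivAt_px hD) hcx hM0)
  have hDt := eq_sub_of_add_eq (hmom t x)
  rw [hF, px_eq_of_hasDerivAt (fun _ => rfl) hBx] at hDt
  rw [hE, hH, hDt, eq_neg_of_add_eq_zero_left (hmass t x), hca2]
  field_simp
  ring

/-- for C¹ solutions of the air-layer equations, the air energy
`E_a = M v²/2 + c_a² M/(γ(γ-1))` and the air entropy flux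
`H_a = (E_a + c_a² M/γ) v` satisfy
`∂ₜ E_a + ∂ₓ H_a = (c_a² M/(γ(S-A))) ∂ₜ A`. -/
theorem air_energy_balance
    (γ k ρ₀ : ℝ) (hγ : 1 < γ) (hk : 0 < k) (hρ₀ : 0 < ρ₀)
    (S : ℝ → ℝ) (hSreg : ContDiff ℝ 1 S)
    (M D A : ℝ → ℝ → ℝ)
    (hMreg : ContDiff ℝ 1 (Function.uncurry M))
    (hDreg : ContDiff ℝ 1 (Function.uncurry D))
    (hAreg : ContDiff ℝ 1 (Function.uncurry A))
    (hMpos : ∀ t x, 0 < M t x)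
    (hSA : ∀ t x, 0 < S x - A t x)
    (ca2 : ℝ → ℝ → ℝ)
    (hca2 : ∀ t x, ca2 t x = k * γ * (ρ₀ * M t x / (S x - A t x)) ^ (γ - 1))
    (hmass : ∀ t x, pt M t x + px D t x = 0)
    (hmom : ∀ t x,
      pt D t x + px (fun t x => D t x ^ 2 / M t x + M t x * ca2 t x / γ) t x
        = M t x * ca2 t x / (γ * (S x - A t x)) * px (fun t x => S x - A t x) t x)
    (v : ℝ → ℝ → ℝ) (hv : ∀ t x, v t x = D t x / M t x)
    (Ea Ha : ℝ → ℝ → ℝ)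
    (hEa : ∀ t x, Ea t x = M t x * v t x ^ 2 / 2
        + ca2 t x * M t x / (γ * (γ - 1)))
    (hHa : ∀ t x, Ha t x = (Ea t x + ca2 t x * M t x / γ) * v t x) :
    ∀ t x, pt Ea t x + px Ha t x
      = ca2 t x * M t x / (γ * (S x - A t x)) * pt A t x :=
  air_energy_balance_general γ k ρ₀ hγ hρ₀ S hSreg M D A hMreg hDreg hAreg hMpos hSA ca2 hca2 hmass
    hmom v hv Ea Ha hEa hHa
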